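/- Let l ∈ ℝ⁴ be lightlike (l·l = 0) and let D_l denote the directional derivative along the vector l (i.e. D_l f(β) = d/dt f(β + t l)|_{t=0}). Then for every m ∈ ℕ and every β ∈ ℝ⁴ with β·β ≠ 0, the m-fold iterate satisfies D_l^m[(β·β)⁻¹] = (−2)^m · m! · (l·β)^m · (β·β)^{−m−1}. -/

import Mathlib

/-! For a symmetric bilinear form `B` and an isotropic vector `l`, differentiating
`x ↦ (B l x)^n (B x x)^z` along `l` kills the derivative of the first factor, which is
`B l l = 0`, and turns the second into `2z (B l x) (B x x)^(z-1)`. Each step thus raises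
the power of `B l x` by one and lowers that of `B x x` by one, and at step `k + 1` the exponent
`z = -k - 1` contributes the factor `-2 (k + 1)`. -/

noncomputable section

/-- Minkowski inner product on ℝ⁴: x·y = x₀y₀ − x₁y₁ − x₂y₂ − x₃y₃. -/
def mink (x y : Fin 4 → ℝ) : ℝ := x 0 * y 0 - x 1 * y 1 - x 2 * y 2 - x 3 * y 3

/-- Directional derivative along the vector l. -/
def dirDeriv (l : Fin 4 → ℝ) (f : (Fin 4 → ℝ) → ℝ) (β : Fin 4 → ℝ) : ℝ :=
  fderiv ℝ f β l

open Set Nat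

namespace ContinuousLinearMap

variable {E : Type*} [NormedAddCommGroup E] [NormedSpace ℝ E] (B : E →L[ℝ] E →L[ℝ] ℝ)

theorem hasFDerivAt_apply_self (x : E) : HasFDerivAt (fun y => B y y) (B x + B.flip x) x :=
  (B.hasFDerivAt_of_bilinear (hasFDerivAt_id x) (hasFDerivAt_id x)).congr_fderiv <| by
    ext v
    simp

theorem isOpen_setOf_apply_self_ne_zero : IsOpen {x : E | B x x ≠ 0} :=
  isOpen_ne_fun (by fun_prop) continuous_const

variable {B} {l : E}

theorem fderiv_const_mul_pow_mul_zpow_apply_of_isotropic (hB : ∀ x y, B x y = B y x)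
    (hl : B l l = 0) {x : E} (hx : B x x ≠ 0) (c : ℝ) (n : ℕ) (z : ℤ) :
    fderiv ℝ (fun y => c * B l y ^ n * B y y ^ z) x l
      = c * (2 * z) * B l x ^ (n + 1) * B x x ^ (z - 1) := by
  have hpow := (hasDerivAt_pow n (B l x)).comp_hasFDerivAt x (B l).hasFDerivAt
  have hzpow := (hasDerivAt_zpow z (B x x) (.inl hx)).comp_hasFDerivAt (f := fun y => B y y) x
    (B.hasFDerivAt_apply_self x)
  have h : HasFDerivAt (fun y => c * B l y ^ n * B y y ^ z) _ x := (hpow.const_mul c).mul hzpow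
  rw [h.fderiv]
  simp only [Function.comp_apply, smul_add, add_apply, smul_apply, hB x l, smul_eq_mul,
    flip_apply, hl, mul_zero, add_zero]
  ring

theorem iterate_fderiv_inv_apply_self_of_isotropic (hB : ∀ x y, B x y = B y x)
    (hl : B l l = 0) (m : ℕ) :
    EqOn ((fun f x => fderiv ℝ f x l)^[m] fun x => (B x x)⁻¹)
      (fun x => (-2) ^ m * m ! * B l x ^ m * B x x ^ (-(m : ℤ) - 1)) {x | B x x ≠ 0} := by
  induction m with
  | zero => intro x _; simp
  | succ m ih =>
    intro x hx
    have hev := ih.eventuallyEq_of_mem (B.isOpen_setOf_apply_self_ne_zero.mem_nhds hx)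
    rw [Function.iterate_succ_apply', hev.fderiv_eq,
      fderiv_const_mul_pow_mul_zpow_apply_of_isotropic hB hl hx]
    push_cast [Nat.factorial_succ]
    rw [show -(m : ℤ) - 1 - 1 = -((m : ℤ) + 1) - 1 by ring]
    ring

end ContinuousLinearMap

def minkowskiForm : (Fin 4 → ℝ) →L[ℝ] (Fin 4 → ℝ) →L[ℝ] ℝ :=
  let p (i : Fin 4) : (Fin 4 → ℝ) →L[ℝ] ℝ := ContinuousLinearMap.proj i
  (p 0).smulRight (p 0) - (p 1).smulRight (p 1) - (p 2).smulRight (p 2) - (p 3).smulRight (p 3)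

@[simp]
theorem minkowskiForm_apply (x y : Fin 4 → ℝ) : minkowskiForm x y = mink x y := by
  simp [minkowskiForm, mink]

theorem mink_comm (x y : Fin 4 → ℝ) : mink x y = mink y x := by
  unfold mink
  ring

/-- For lightlike l (l·l = 0), the m-fold directional derivative of
(β·β)⁻¹ along l equals (−2)^m · m! · (l·β)^m · (β·β)^{−m−1} at every β
with β·β ≠ 0. -/
theorem iterated_dirDeriv_inv_minkowski_sq
    (l : Fin 4 → ℝ) (hl : mink l l = 0) (m : ℕ) (β : Fin 4 → ℝ)
    (hβ : mink β β ≠ 0) :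
    ((dirDeriv l)^[m] (fun β' => (mink β' β')⁻¹)) β
      = (-2 : ℝ) ^ m * (Nat.factorial m : ℝ) * (mink l β) ^ m
          * (mink β β) ^ (-(m : ℤ) - 1) := by
  have key := minkowskiForm.iterate_fderiv_inv_apply_self_of_isotropic
    (by simpa using mink_comm) (l := l) (by simpa using hl) m (x := β) (by simpa using hβ)
  simp only [minkowskiForm_apply] at key
  exact key
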